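/- If A is a T-convex set, then for every n ≥ 1 the n-th power of the restricted operator equals the restriction of the n-th power: (T_A)ⁿ = (Tⁿ)_A as operators on Lᵖ. -/

import Mathlib

open MeasureTheory ENNReal Filter Set

noncomputable section

namespace PaperAtoms

variable {Ω : Type*} [MeasurableSpace Ω] {μ : MeasureTheory.Measure Ω} {p : ℝ≥0∞} [Fact (1 ≤ p)]

/-- `T` is a positive operator on `Lp`. -/
def IsPositiveOp (T : Lp ℝ p μ →L[ℝ] Lp ℝ p μ) : Prop :=
  ∀ f : Lp ℝ p μ, 0 ≤ f → 0 ≤ T f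

/-- A measurable set `A` is `T`-invariant if `T f` vanishes a.e. on `Aᶜ` for every
nonnegative `f ∈ Lp` vanishing a.e. on `Aᶜ`. -/
def Invariant (T : Lp ℝ p μ →L[ℝ] Lp ℝ p μ) (A : Set Ω) : Prop :=
  MeasurableSet A ∧
    ∀ f : Lp ℝ p μ, 0 ≤ f → (∀ᵐ x ∂μ, x ∉ A → f x = 0) → ∀ᵐ x ∂μ, x ∉ A → T f x = 0

/-- `A` is `T`-co-invariant if `Aᶜ` is `T`-invariant. -/
def CoInvariant (T : Lp ℝ p μ →L[ℝ] Lp ℝ p μ) (A : Set Ω) : Prop :=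
  Invariant T Aᶜ

/-- `A` is `T`-admissible if it belongs to the σ-field generated by the `T`-invariant sets. -/
def Admissible (T : Lp ℝ p μ →L[ℝ] Lp ℝ p μ) (A : Set Ω) : Prop :=
  MeasurableSet[MeasurableSpace.generateFrom {B : Set Ω | Invariant T B}] A

/-- A `T`-atom is a minimal `T`-admissible set with positive measure. -/
def Atom (T : Lp ℝ p μ →L[ℝ] Lp ℝ p μ) (A : Set Ω) : Prop :=
  Admissible T A ∧ 0 < μ A ∧
    ∀ B : Set Ω, Admissible T B → B ≤ᵐ[μ] A → μ B = 0 ∨ B =ᵐ[μ] A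

/-- `FA` is (a version of) the future of `A`: the minimal `T`-invariant set containing `A` a.e. -/
def IsFuture (T : Lp ℝ p μ →L[ℝ] Lp ℝ p μ) (A FA : Set Ω) : Prop :=
  Invariant T FA ∧ A ≤ᵐ[μ] FA ∧
    ∀ B : Set Ω, Invariant T B → A ≤ᵐ[μ] B → FA ≤ᵐ[μ] B

/-- `PA` is (a version of) the past of `A`: the minimal `T`-co-invariant set containing `A` a.e. -/
def IsPast (T : Lp ℝ p μ →L[ℝ] Lp ℝ p μ) (A PA : Set Ω) : Prop :=
  CoInvariant T PA ∧ A ≤ᵐ[μ] PA ∧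
    ∀ B : Set Ω, CoInvariant T B → A ≤ᵐ[μ] B → PA ≤ᵐ[μ] B

/-- `A` is `T`-convex if `A = F(A) ∩ P(A)` a.e. -/
def Convexe (T : Lp ℝ p μ →L[ℝ] Lp ℝ p μ) (A : Set Ω) : Prop :=
  MeasurableSet A ∧
    ∃ FA PA : Set Ω, IsFuture T A FA ∧ IsPast T A PA ∧ A =ᵐ[μ] (FA ∩ PA : Set Ω)

/-- Multiplication by the indicator function of `A`, as a bounded operator on `Lp`
(defined as `0` if `A` is not measurable). -/
def indicatorCLM (μ : MeasureTheory.Measure Ω) (p : ℝ≥0∞) [Fact (1 ≤ p)] (A : Set Ω) :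
    Lp ℝ p μ →L[ℝ] Lp ℝ p μ := by
  classical
  exact if hA : MeasurableSet A then
    LinearMap.mkContinuous
      { toFun := fun f => ((Lp.memLp f).indicator hA).toLp (A.indicator f)
        map_add' := fun f g => by
          rw [← MemLp.toLp_add]
          refine MemLp.toLp_congr _ _ ?_
          filter_upwards [Lp.coeFn_add f g] with x hx
          simp only [Pi.add_apply, Set.indicator_apply, hx]
          split <;> simp
        map_smul' := fun c f => by
          rw [RingHom.id_apply, ← MemLp.toLp_const_smul]
          refine MemLp.toLp_congr _ _ ?_
          filter_upwards [Lp.coeFn_smul c f] with x hx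
          simp only [Pi.smul_apply, Set.indicator_apply, hx, smul_eq_mul]
          split <;> simp }
      1
      (fun f => by
        simp only [LinearMap.coe_mk, AddHom.coe_mk, one_mul]
        rw [Lp.norm_toLp, Lp.norm_def]
        exact ENNReal.toReal_mono (Lp.eLpNorm_ne_top f) (eLpNorm_indicator_le _))
  else 0

/-- The restriction `T_A = 1_A T 1_A` of `T` to a measurable set `A`. -/
def restrictOp (T : Lp ℝ p μ →L[ℝ] Lp ℝ p μ) (A : Set Ω) : Lp ℝ p μ →L[ℝ] Lp ℝ p μ :=
  (indicatorCLM μ p A).comp (T.comp (indicatorCLM μ p A))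

/-- The spectral radius of a bounded operator, via Gelfand's formula
`ρ(T) = inf_n ‖Tⁿ‖^(1/n) = lim_n ‖Tⁿ‖^(1/n)`. -/
def specRadius (T : Lp ℝ p μ →L[ℝ] Lp ℝ p μ) : ℝ :=
  ⨅ n : ℕ, ‖T ^ (n + 1)‖ ^ (((n : ℝ) + 1)⁻¹)

/-- The spectral radius `ρ(A)` of the restriction of `T` to `A`. -/
def rhoSet (T : Lp ℝ p μ →L[ℝ] Lp ℝ p μ) (A : Set Ω) : ℝ :=
  specRadius (restrictOp T A)

/-- A measurable set `A` with `μ A > 0` is `T`-irreducible if the restriction of `T` to `A`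
is irreducible, i.e. every `T_A`-invariant subset of `A` is a.e. trivial. -/
def Irreducible (T : Lp ℝ p μ →L[ℝ] Lp ℝ p μ) (A : Set Ω) : Prop :=
  MeasurableSet A ∧ 0 < μ A ∧
    ∀ B : Set Ω, Invariant (restrictOp T A) B → B ≤ᵐ[μ] A → μ B = 0 ∨ B =ᵐ[μ] A

/-- `T` is power compact if some power `T^k`, `k ≥ 1`, is a compact operator. -/
def PowerCompact (T : Lp ℝ p μ →L[ℝ] Lp ℝ p μ) : Prop :=
  ∃ k : ℕ, 1 ≤ k ∧ IsCompactOperator (⇑(T ^ k))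

/-- `B ≼ A` for atoms: `B ⊆ F(A)` a.e. -/
def Prec (T : Lp ℝ p μ →L[ℝ] Lp ℝ p μ) (B A : Set Ω) : Prop :=
  ∃ FA : Set Ω, IsFuture T A FA ∧ B ≤ᵐ[μ] FA

/-- `B ≺ A` for atoms: `B ⊆ F(A)` a.e. and `B ≠ A` a.e. -/
def PrecStrict (T : Lp ℝ p μ →L[ℝ] Lp ℝ p μ) (B A : Set Ω) : Prop :=
  Prec T B A ∧ ¬ (B =ᵐ[μ] A)

/-- A critical atom: a `T`-atom whose spectral radius equals that of `T`. -/
def CriticalAtom (T : Lp ℝ p μ →L[ℝ] Lp ℝ p μ) (A : Set Ω) : Prop :=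
  Atom T A ∧ rhoSet T A = specRadius T

/-- There is a chain `A = A_0 ≻ A_1 ≻ ⋯ ≻ A_n` of critical atoms starting at `A`. -/
def ChainFrom (T : Lp ℝ p μ →L[ℝ] Lp ℝ p μ) (A : Set Ω) (n : ℕ) : Prop :=
  ∃ c : ℕ → Set Ω, c 0 = A ∧ (∀ i ≤ n, CriticalAtom T (c i)) ∧
    ∀ i < n, PrecStrict T (c (i + 1)) (c i)

/-- The generalized eigenspace `⋃ₖ ker (T - λ id)^k` of `T` at `λ`. -/
def genEigenspace (T : Lp ℝ p μ →L[ℝ] Lp ℝ p μ) (l : ℝ) : Submodule ℝ (Lp ℝ p μ) :=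
  ⨆ k : ℕ, LinearMap.ker (((T - l • (1 : Lp ℝ p μ →L[ℝ] Lp ℝ p μ)) ^ k : Lp ℝ p μ →L[ℝ] Lp ℝ p μ) : Lp ℝ p μ →ₗ[ℝ] Lp ℝ p μ)

/-- The algebraic multiplicity of `λ` for `T`. -/
def algMult (T : Lp ℝ p μ →L[ℝ] Lp ℝ p μ) (l : ℝ) : ℕ :=
  Module.finrank ℝ ↥(genEigenspace T l)

/-- The set of `k` at which the kernels of `(T - ρ(T) id)^k` stabilize; the ascent of `T`
at `ρ(T)` is its infimum. -/
def ascentSet (T : Lp ℝ p μ →L[ℝ] Lp ℝ p μ) : Set ℕ :=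
  {k : ℕ | LinearMap.ker (((T - specRadius T • (1 : Lp ℝ p μ →L[ℝ] Lp ℝ p μ)) ^ k : Lp ℝ p μ →L[ℝ] Lp ℝ p μ) : Lp ℝ p μ →ₗ[ℝ] Lp ℝ p μ)
      = LinearMap.ker (((T - specRadius T • (1 : Lp ℝ p μ →L[ℝ] Lp ℝ p μ)) ^ (k + 1) : Lp ℝ p μ →L[ℝ] Lp ℝ p μ) : Lp ℝ p μ →ₗ[ℝ] Lp ℝ p μ)}

/-- `D` is (a version of) the set `T(C)`, i.e. the support of `T(1_C f)` for any a.e.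
positive `f ∈ Lp`. -/
def IsImage (T : Lp ℝ p μ →L[ℝ] Lp ℝ p μ) (C D : Set Ω) : Prop :=
  MeasurableSet C ∧ MeasurableSet D ∧
    ∀ f : Lp ℝ p μ, (∀ᵐ x ∂μ, 0 < f x) →
      D =ᵐ[μ] ({x | T (indicatorCLM μ p C f) x ≠ 0} : Set Ω)

/-- `D` is (a version of) the `k`-fold iterated image `T^k(C)`. -/
def IsIterImage (T : Lp ℝ p μ →L[ℝ] Lp ℝ p μ) : ℕ → Set Ω → Set Ω → Prop
  | 0, C, D => D = C
  | (k + 1), C, D => ∃ E : Set Ω, IsIterImage T k C E ∧ IsImage T E D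

variable {Ω : Type*} [MeasurableSpace Ω] {μ : MeasureTheory.Measure Ω} {p : ℝ≥0∞}

section RestrictPow

variable [Fact (1 ≤ p)]

theorem map_eq_zero_of_map_nonneg_eq_zero {E F : Type*} [AddCommGroup E] [Lattice E]
    [IsOrderedAddMonoid E] [AddCommGroup F] (S : E →+ F) (h : ∀ f, 0 ≤ f → S f = 0) (f : E) :
    S f = 0 := by
  rw [← posPart_sub_negPart f, map_sub, h _ (posPart_nonneg f), h _ (negPart_nonneg f),
    sub_zero]

theorem IsPositiveOp.pow {T : Lp ℝ p μ →L[ℝ] Lp ℝ p μ} (hT : IsPositiveOp T) (n : ℕ) :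
    IsPositiveOp (T ^ n) := by
  induction n with
  | zero => simp [IsPositiveOp]
  | succ n ih => exact fun f hf => by rw [pow_succ', mul_apply_eq_comp]; exact hT _ (ih f hf)

theorem Invariant.pow {T : Lp ℝ p μ →L[ℝ] Lp ℝ p μ} (hT : IsPositiveOp T) {B : Set Ω}
    (hB : Invariant T B) (n : ℕ) : Invariant (T ^ n) B := by
  induction n with
  | zero => exact ⟨hB.1, fun f _ hf => by simpa using hf⟩
  | succ n ih =>
    refine ⟨hB.1, fun f hf hfB => ?_⟩
    rw [pow_succ', mul_apply_eq_comp]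
    exact hB.2 _ (hT.pow n f hf) (ih.2 f hf hfB)

theorem indicatorCLM_coeFn {A : Set Ω} (hA : MeasurableSet A) (f : Lp ℝ p μ) :
    indicatorCLM μ p A f =ᵐ[μ] A.indicator f := by
  simp only [indicatorCLM, dif_pos hA, LinearMap.mkContinuous_apply, LinearMap.coe_mk,
    AddHom.coe_mk]
  exact MemLp.coeFn_toLp _

theorem indicatorCLM_nonneg {A : Set Ω} (hA : MeasurableSet A) {f : Lp ℝ p μ} (hf : 0 ≤ f) :
    0 ≤ indicatorCLM μ p A f := by
  rw [← Lp.coeFn_nonneg] at hf ⊢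
  filter_upwards [hf, indicatorCLM_coeFn hA f] with x hx hx'
  rw [hx']
  exact Set.indicator_nonneg (fun _ _ => hx) x

theorem indicatorCLM_indicatorCLM {A : Set Ω} (hA : MeasurableSet A) (f : Lp ℝ p μ) :
    indicatorCLM μ p A (indicatorCLM μ p A f) = indicatorCLM μ p A f := by
  apply Lp.ext
  filter_upwards [indicatorCLM_coeFn hA (indicatorCLM μ p A f), indicatorCLM_coeFn hA f,
    (indicatorCLM_coeFn hA f).indicator (s := A)] with x h1 h2 h3
  rw [h1, h3, Set.indicator_indicator, Set.inter_self, h2]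

theorem indicatorCLM_add_indicatorCLM_compl {A : Set Ω} (hA : MeasurableSet A)
    (f : Lp ℝ p μ) : indicatorCLM μ p A f + indicatorCLM μ p Aᶜ f = f := by
  apply Lp.ext
  filter_upwards [Lp.coeFn_add (indicatorCLM μ p A f) (indicatorCLM μ p Aᶜ f),
    indicatorCLM_coeFn hA f, indicatorCLM_coeFn hA.compl f] with x h1 h2 h3
  rw [h1, Pi.add_apply, h2, h3]
  exact congrFun (A.indicator_self_add_compl f) x

theorem ae_notMem_indicatorCLM_eq_zero {A B : Set Ω} (hA : MeasurableSet A) {f : Lp ℝ p μ}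
    (hf : ∀ᵐ x ∂μ, x ∈ A → x ∉ B → f x = 0) :
    ∀ᵐ x ∂μ, x ∉ B → indicatorCLM μ p A f x = 0 := by
  filter_upwards [indicatorCLM_coeFn hA f, hf] with x hx hfx hxB
  rw [hx, Set.indicator_apply_eq_zero]
  exact fun hxA => hfx hxA hxB

theorem indicatorCLM_eq_zero {A : Set Ω} (hA : MeasurableSet A) {f : Lp ℝ p μ}
    (hf : ∀ᵐ x ∂μ, x ∈ A → f x = 0) : indicatorCLM μ p A f = 0 := by
  apply Lp.ext
  filter_upwards [indicatorCLM_coeFn hA f, hf, Lp.coeFn_zero ℝ p μ] with x hx hfx h0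
  rw [hx, h0, Pi.zero_apply, Set.indicator_apply_eq_zero]
  exact hfx

/-- Mass that leaves a convex set never comes back: `Tⁿ` carries `A` into `F(A)`, the part of
`F(A)` outside `A = F(A) ∩ P(A)` lies in the co-invariant set `P(A)ᶜ`, and `T` keeps it there. -/
theorem Convexe.indicatorCLM_apply_compl_pow_eq_zero {T : Lp ℝ p μ →L[ℝ] Lp ℝ p μ}
    (hT : IsPositiveOp T) {A : Set Ω} (hA : Convexe T A) (n : ℕ) (f : Lp ℝ p μ) :
    indicatorCLM μ p A (T (indicatorCLM μ p Aᶜ ((T ^ n) (indicatorCLM μ p A f)))) = 0 := by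
  obtain ⟨hAm, FA, PA, ⟨hF, hAF, -⟩, ⟨hP, hAP, -⟩, hAeq⟩ := hA
  let S : Lp ℝ p μ →L[ℝ] Lp ℝ p μ := (indicatorCLM μ p A).comp
    (T.comp ((indicatorCLM μ p Aᶜ).comp ((T ^ n).comp (indicatorCLM μ p A))))
  refine map_eq_zero_of_map_nonneg_eq_zero S.toLinearMap.toAddMonoidHom (fun g hg => ?_) f
  have hg₁ : 0 ≤ indicatorCLM μ p A g := indicatorCLM_nonneg hAm hg
  have hg₁F : ∀ᵐ x ∂μ, x ∉ FA → indicatorCLM μ p A g x = 0 :=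
    ae_notMem_indicatorCLM_eq_zero hAm (by filter_upwards [hAF] with x hx using
      fun hxA hxF => (hxF (hx hxA)).elim)
  set u := (T ^ n) (indicatorCLM μ p A g)
  have hu : 0 ≤ u := hT.pow n _ hg₁
  have huF : ∀ᵐ x ∂μ, x ∉ FA → u x = 0 := (hF.pow hT n).2 _ hg₁ hg₁F
  set v := indicatorCLM μ p Aᶜ u
  have hv : 0 ≤ v := indicatorCLM_nonneg hAm.compl hu
  have hvP : ∀ᵐ x ∂μ, x ∉ PAᶜ → v x = 0 :=
    ae_notMem_indicatorCLM_eq_zero hAm.compl (by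
      filter_upwards [huF, Filter.eventuallyEq_set.mp hAeq] with x hux hiff hxA hxP
      exact hux fun hxF => hxA (hiff.mpr ⟨hxF, not_not.mp hxP⟩))
  have hTvP : ∀ᵐ x ∂μ, x ∉ PAᶜ → T v x = 0 := hP.2 v hv hvP
  refine indicatorCLM_eq_zero hAm ?_
  filter_upwards [hTvP, hAP] with x hx hxP hxA
  exact hx (not_not.mpr (hxP hxA))

theorem Convexe.restrictOp_pow_succ {T : Lp ℝ p μ →L[ℝ] Lp ℝ p μ} (hT : IsPositiveOp T)
    {A : Set Ω} (hA : Convexe T A) (n : ℕ) :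
    restrictOp (T ^ (n + 1)) A = restrictOp T A * restrictOp (T ^ n) A := by
  ext1 f
  change indicatorCLM μ p A ((T ^ (n + 1)) (indicatorCLM μ p A f))
    = indicatorCLM μ p A (T (indicatorCLM μ p A
        (indicatorCLM μ p A ((T ^ n) (indicatorCLM μ p A f)))))
  set u := (T ^ n) (indicatorCLM μ p A f)
  have hsplit : T u = T (indicatorCLM μ p A u) + T (indicatorCLM μ p Aᶜ u) := by
    rw [← map_add, indicatorCLM_add_indicatorCLM_compl hA.1]
  rw [indicatorCLM_indicatorCLM hA.1, pow_succ', mul_apply_eq_comp, hsplit, map_add,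
    hA.indicatorCLM_apply_compl_pow_eq_zero hT n f, add_zero]

end RestrictPow

theorem statement17_general [Fact (1 ≤ p)]
    (T : Lp ℝ p μ →L[ℝ] Lp ℝ p μ) (hT : IsPositiveOp T)
    (A : Set Ω) (hA : Convexe T A) (n : ℕ) (hn : 1 ≤ n) :
    (restrictOp T A) ^ n = restrictOp (T ^ n) A := by
  induction n, hn using Nat.le_induction with
  | base => rw [pow_one, pow_one]
  | succ n _ ih => rw [pow_succ', ih, hA.restrictOp_pow_succ hT n]

theorem statement17 [SigmaFinite μ] (hμ : μ Set.univ ≠ 0) [Fact (1 ≤ p)]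
    (hp : 1 < p) (hp' : p ≠ ∞)
    (T : Lp ℝ p μ →L[ℝ] Lp ℝ p μ) (hT : IsPositiveOp T)
    (A : Set Ω) (hA : Convexe T A) (n : ℕ) (hn : 1 ≤ n) :
    (restrictOp T A) ^ n = restrictOp (T ^ n) A :=
  statement17_general T hT A hA n hn

end PaperAtoms
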